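/- Let U ⊆ ℂ be open and let G : U → ℂ^m be holomorphic with ⟨⟨G(z),G(z)⟩⟩ ≠ 0 for all z ∈ U and with isotropic derivative, i.e. ⟨⟨G'(z),G'(z)⟩⟩ = 0 for all z ∈ U. Then the holomorphic map T∘G also has isotropic derivative: ⟨⟨(T∘G)'(z), (T∘G)'(z)⟩⟩ = 0 for all z ∈ U. -/

import Mathlib

open scoped BigOperators

/-- The ℂ-bilinear form `⟨⟨Z,W⟩⟩ = ∑ j, Z j * W j` on `ℂ^m` (no conjugation). -/
noncomputable def bilin {m : ℕ} (Z W : Fin m → ℂ) : ℂ := ∑ j, Z j * W j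

/-- The holomorphic inversion `T(Z) = Z / ⟨⟨Z,Z⟩⟩`. -/
noncomputable def Tmap {m : ℕ} (Z : Fin m → ℂ) : Fin m → ℂ := (bilin Z Z)⁻¹ • Z

/-!
The differential of `T` at `Z` is `V ↦ V / q - (2 ⟨⟨Z,V⟩⟩ / q²) Z` with `q = ⟨⟨Z,Z⟩⟩`, and expanding
shows that it multiplies `⟨⟨V,V⟩⟩` by `q⁻²`: inversion is conformal for the bilinear form. Hence it
sends the isotropic vector `G'(z)` to an isotropic vector, which by the chain rule is `(T ∘ G)'(z)`.
-/

section Bilin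

variable {m : ℕ}

theorem bilin_eq_dotProduct (Z W : Fin m → ℂ) : bilin Z W = Z ⬝ᵥ W := rfl

theorem bilin_comm (Z W : Fin m → ℂ) : bilin Z W = bilin W Z := dotProduct_comm Z W

theorem hasDerivAt_bilin {F H : ℂ → Fin m → ℂ} {F' H' : Fin m → ℂ} {z : ℂ}
    (hF : HasDerivAt F F' z) (hH : HasDerivAt H H' z) :
    HasDerivAt (fun w => bilin (F w) (H w))
      (bilin F' (H z) + bilin (F z) H') z := by
  rw [hasDerivAt_pi] at hF hH
  have h := HasDerivAt.fun_sum (u := Finset.univ) fun j _ => (hF j).mul (hH j)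
  rwa [Finset.sum_add_distrib] at h

noncomputable def dTmap (Z V : Fin m → ℂ) : Fin m → ℂ :=
  (bilin Z Z)⁻¹ • V - (2 * bilin Z V / bilin Z Z ^ 2) • Z

theorem hasDerivAt_Tmap_comp {G : ℂ → Fin m → ℂ} {V : Fin m → ℂ} {z : ℂ}
    (hG : HasDerivAt G V z) (hne : bilin (G z) (G z) ≠ 0) :
    HasDerivAt (fun w => Tmap (G w)) (dTmap (G z) V) z := by
  have hinv := (hasDerivAt_bilin hG hG).inv hne
  refine (hinv.smul hG).congr_deriv ?_
  rw [dTmap, bilin_comm V, ← two_mul, neg_div, neg_smul, ← sub_eq_add_neg]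
  rfl

theorem bilin_dTmap_self (Z V : Fin m → ℂ) :
    bilin (dTmap Z V) (dTmap Z V) = bilin V V / bilin Z Z ^ 2 := by
  by_cases hq : bilin Z Z = 0
  · simp [dTmap, hq, bilin_eq_dotProduct]
  simp only [dTmap, bilin_eq_dotProduct, sub_dotProduct, dotProduct_sub, smul_dotProduct,
    dotProduct_smul, smul_eq_mul, dotProduct_comm V Z] at hq ⊢
  field_simp
  ring

end Bilin

theorem Tmap_comp_isotropic_deriv (m : ℕ) (U : Set ℂ)
    (G : ℂ → Fin m → ℂ)
    (hG : ∀ z ∈ U, DifferentiableAt ℂ G z)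
    (hne : ∀ z ∈ U, bilin (G z) (G z) ≠ 0)
    (hiso : ∀ z ∈ U, bilin (deriv G z) (deriv G z) = 0) :
    ∀ z ∈ U,
      bilin (deriv (fun w => Tmap (G w)) z) (deriv (fun w => Tmap (G w)) z) = 0 := by
  intro z hz
  rw [(hasDerivAt_Tmap_comp (hG z hz).hasDerivAt (hne z hz)).deriv, bilin_dTmap_self, hiso z hz,
    zero_div]
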